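/- Let f : R → R be (1/q)-Lipschitz and 0 < δ ≤ 1. Then T⁻¹(V_δ(f)) ∩ R² is the disjoint union over residue classes s ∈ F of sets V_{δ/q}(f^s), where each f^s : R → R is a (1/q)-Lipschitz function taking values in the disc D_{1/q}(s). In other words, the preimage under T of a vertical δ-tube meets R² in q vertical tubes of radius δ/q, one in each vertical strip D_{1/q}(s) × R. -/

import Mathlib

open scoped Classical
open MeasureTheory Filter

noncomputable section

/-- A complete, locally compact non-Archimedean field with residue field of
order `q`, absolute value normalized so that a uniformizer has norm `1/q`.
`reps` is a set of `q` coset representatives for the residue field: they cover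
the ring of integers by discs of radius `1/q` and are pairwise at distance
`> 1/q`. -/
structure NAField (K : Type*) [NormedField K] where
  na : IsNonarchimedean (fun x : K => ‖x‖)
  complete : CompleteSpace K
  locCompact : LocallyCompactSpace K
  q : ℕ
  one_lt_q : 1 < q
  valGroup : ∀ x : K, x ≠ 0 → ∃ n : ℤ, ‖x‖ = (q : ℝ) ^ n
  exists_unif : ∃ ϖ : K, ‖ϖ‖ = (q : ℝ)⁻¹
  reps : Finset K
  card_reps : reps.card = q
  norm_reps : ∀ s ∈ reps, ‖s‖ ≤ 1
  reps_cover : ∀ x : K, ‖x‖ ≤ 1 → ∃ s ∈ reps, ‖x - s‖ ≤ (q : ℝ)⁻¹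
  reps_sep : ∀ s ∈ reps, ∀ t ∈ reps, s ≠ t → (q : ℝ)⁻¹ < ‖s - t‖

variable {K : Type*} [NormedField K]

/-- `f : R → R` is `(1/q)`-Lipschitz on the ring of integers. -/
def NAField.IsLip (F : NAField K) (f : K → K) : Prop :=
  (∀ t : K, ‖t‖ ≤ 1 → ‖f t‖ ≤ 1) ∧
  ∀ t₁ t₂ : K, ‖t₁‖ ≤ 1 → ‖t₂‖ ≤ 1 → ‖f t₁ - f t₂‖ ≤ ((F.q : ℝ))⁻¹ * ‖t₁ - t₂‖

/-- The unit polydisc `R² ⊆ K²`. -/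
def unitPoly (K : Type*) [NormedField K] : Set (K × K) := {p | ‖p.1‖ ≤ 1 ∧ ‖p.2‖ ≤ 1}

/-- Horizontal `δ`-neighborhood `H_δ(f) = {(t, f t + θ) : t ∈ R, |θ| ≤ δ}`. -/
def Hnbhd (f : K → K) (δ : ℝ) : Set (K × K) :=
  {p | ∃ t θ : K, ‖t‖ ≤ 1 ∧ ‖θ‖ ≤ δ ∧ p = (t, f t + θ)}

/-- Vertical `δ`-neighborhood `V_δ(f) = {(f t + θ, t) : t ∈ R, |θ| ≤ δ}`. -/
def Vnbhd (f : K → K) (δ : ℝ) : Set (K × K) :=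
  {p | ∃ t θ : K, ‖t‖ ≤ 1 ∧ ‖θ‖ ≤ δ ∧ p = (f t + θ, t)}

/-- The automorphism `T(x,y) = (a y + b (x^q - x), x)`. -/
def NAField.Tmap (F : NAField K) (a b : K) : K × K → K × K :=
  fun p => (a * p.2 + b * (p.1 ^ F.q - p.1), p.1)

/-- The inverse automorphism `T⁻¹(x,y) = (y, a⁻¹ (x - b (y^q - y)))`. -/
def NAField.Tinv (F : NAField K) (a b : K) : K × K → K × K :=
  fun p => (p.2, a⁻¹ * (p.1 - b * (p.2 ^ F.q - p.2)))

/-- The attractor `A_T = ⋂_{n ≥ 1} Tⁿ(R²)`. -/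
def NAField.Attractor (F : NAField K) (a b : K) : Set (K × K) :=
  ⋂ n ∈ {n : ℕ | 1 ≤ n}, (F.Tmap a b)^[n] '' unitPoly K

/-- The basin of attraction `B_T = ⋃_{n ≥ 1} T⁻ⁿ(R²)`. -/
def NAField.Basin (F : NAField K) (a b : K) : Set (K × K) :=
  ⋃ n ∈ {n : ℕ | 1 ≤ n}, (F.Tmap a b)^[n] ⁻¹' unitPoly K

/-- `T^k` for `k : ℤ`. -/
def NAField.iterZ (F : NAField K) (a b : K) (k : ℤ) : K × K → K × K :=
  if 0 ≤ k then (F.Tmap a b)^[k.toNat] else (F.Tinv a b)^[(-k).toNat]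

/-- The image under the conjugacy `ω` of the cylinder set of bisequences
agreeing with `s` on coordinates `-M, …, M`: points of the attractor whose
itinerary through the residue strips matches `s` on those coordinates. -/
def NAField.Cyl (F : NAField K) (a b : K) (s : ℤ → K) (M : ℕ) : Set (K × K) :=
  {p | p ∈ F.Attractor a b ∧
    ∀ k : ℤ, |k| ≤ (M : ℤ) → ‖(F.iterZ a b k p).1 - s k‖ ≤ ((F.q : ℝ))⁻¹}

/-!
A point `(x, y)` of `R²` lies in `T⁻¹(V_δ(f))` iff `‖a y + φ(x) - f(x)‖ ≤ δ`. The residue field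
`R/𝔪` has `q` elements, so `x^q ≡ x`, and `x^q - y^q = (x - y) · ∑ xⁱ y^(q-1-i)` with the sum
`≡ q y^(q-1) ≡ 0` when `x ≡ y`. Hence on a residue disc `D_{1/q}(s)` the map `φ - f` is dominated
by its linear term `-b x` and multiplies distances by exactly `q = ‖b‖`. The map
`x ↦ x + (a t + φ(x) - f(x)) / b` is then a `1/q`-contraction of `D_{1/q}(s)`; its fixed point
`f^s(t)` solves `a t + φ(x) = f(x)`, and the scaling gives
`‖a y + φ(x) - f(x)‖ = q ‖x - f^s(y)‖` on `D_{1/q}(s)`, which turns the tube condition into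
`‖x - f^s(y)‖ ≤ δ/q` and makes `f^s` `1/q`-Lipschitz.
-/

namespace IsUltrametricDist

variable {E : Type*} [SeminormedAddCommGroup E] [IsUltrametricDist E]

lemma norm_sub_le_max (x y : E) : ‖x - y‖ ≤ max ‖x‖ ‖y‖ := by
  simpa [sub_eq_add_neg] using norm_add_le_max x (-y)

lemma norm_sub_le_of_norm_sub_le {x y s : E} {r : ℝ} (hx : ‖x - s‖ ≤ r) (hy : ‖y - s‖ ≤ r) :
    ‖x - y‖ ≤ r := by
  simpa using (norm_sub_le_max (x - s) (y - s)).trans (max_le hx hy)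

lemma norm_le_of_norm_sub_le {x s : E} {r : ℝ} (hs : ‖s‖ ≤ r) (hx : ‖x - s‖ ≤ r) : ‖x‖ ≤ r := by
  simpa using (norm_add_le_max (x - s) s).trans (max_le hx hs)

end IsUltrametricDist

open IsUltrametricDist

lemma mem_vnbhd_iff {g : K → K} {δ : ℝ} {p : K × K} :
    p ∈ Vnbhd g δ ↔ ‖p.2‖ ≤ 1 ∧ ‖p.1 - g p.2‖ ≤ δ := by
  constructor
  · rintro ⟨t, θ, ht, hθ, rfl⟩
    simpa using ⟨ht, hθ⟩
  · rintro ⟨ht, hθ⟩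
    exact ⟨p.2, p.1 - g p.2, ht, hθ, by simp⟩

namespace NAField

lemma isUltrametricDist (F : NAField K) : IsUltrametricDist K :=
  isUltrametricDist_of_isNonarchimedean_norm F.na

lemma q_pos (F : NAField K) : (0 : ℝ) < F.q := by
  exact_mod_cast zero_lt_one.trans F.one_lt_q

lemma inv_q_pos (F : NAField K) : (0 : ℝ) < (F.q : ℝ)⁻¹ :=
  inv_pos.2 F.q_pos

lemma inv_q_lt_one (F : NAField K) : (F.q : ℝ)⁻¹ < 1 :=
  inv_lt_one_of_one_lt₀ (by exact_mod_cast F.one_lt_q)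

lemma norm_le_one_of_norm_sub_le (F : NAField K) {x s : K} (hs : ‖s‖ ≤ 1)
    (hx : ‖x - s‖ ≤ (F.q : ℝ)⁻¹) : ‖x‖ ≤ 1 :=
  have := F.isUltrametricDist
  norm_le_of_norm_sub_le hs (hx.trans F.inv_q_lt_one.le)

lemma reps_eq_of_norm_sub_le (F : NAField K) {x s s' : K} (hs : s ∈ F.reps) (hs' : s' ∈ F.reps)
    (hx : ‖x - s‖ ≤ (F.q : ℝ)⁻¹) (hx' : ‖x - s'‖ ≤ (F.q : ℝ)⁻¹) : s = s' := by
  have := F.isUltrametricDist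
  by_contra hne
  refine (F.reps_sep s hs s' hs' hne).not_ge (norm_sub_le_of_norm_sub_le (s := x) ?_ ?_)
  · rwa [norm_sub_rev]
  · rwa [norm_sub_rev]

lemma norm_le_inv_q_of_norm_lt_one (F : NAField K) {x : K} (hx : ‖x‖ < 1) : ‖x‖ ≤ (F.q : ℝ)⁻¹ := by
  rcases eq_or_ne x 0 with rfl | hx0
  · simp [F.inv_q_pos.le]
  obtain ⟨n, hn⟩ := F.valGroup x hx0
  have hq : (1 : ℝ) < F.q := by exact_mod_cast F.one_lt_q
  rw [hn] at hx ⊢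
  have hn : n ≤ -1 := Int.le_sub_one_of_lt ((zpow_lt_one_iff_right₀ hq).1 hx)
  simpa using zpow_le_zpow_right₀ hq.le hn

def integers (F : NAField K) : Subring K where
  carrier := {x | ‖x‖ ≤ 1}
  mul_mem' {x y} hx hy := by
    change ‖x * y‖ ≤ 1
    rw [norm_mul]
    exact mul_le_one₀ hx (norm_nonneg y) hy
  one_mem' := by simp
  add_mem' {x y} hx hy := (F.na x y).trans (max_le hx hy)
  zero_mem' := by simp
  neg_mem' := by simp

lemma mem_integers (F : NAField K) {x : K} : x ∈ F.integers ↔ ‖x‖ ≤ 1 :=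
  Iff.rfl

def maximalIdeal (F : NAField K) : Ideal F.integers where
  carrier := {x | ‖(x : K)‖ ≤ (F.q : ℝ)⁻¹}
  add_mem' {x y} hx hy := (F.na x y).trans (max_le hx hy)
  zero_mem' := by simp [F.inv_q_pos.le]
  smul_mem' c x hx := by
    change ‖(c : K) * x‖ ≤ _
    rw [norm_mul]
    exact (mul_le_of_le_one_left (norm_nonneg _) c.2).trans hx

lemma mem_maximalIdeal (F : NAField K) {x : F.integers} :
    x ∈ F.maximalIdeal ↔ ‖(x : K)‖ ≤ (F.q : ℝ)⁻¹ :=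
  Iff.rfl

instance (F : NAField K) : F.maximalIdeal.IsMaximal := by
  refine Ideal.isMaximal_iff.2 ⟨fun h => ?_, fun J x _ hxI hxJ => ?_⟩
  · have := F.mem_maximalIdeal.1 h
    simp only [OneMemClass.coe_one, norm_one] at this
    exact this.not_gt F.inv_q_lt_one
  · have hx1 : ‖(x : K)‖ = 1 :=
      le_antisymm x.2 (not_lt.1 fun h => hxI (F.norm_le_inv_q_of_norm_lt_one h))
    have hx0 : (x : K) ≠ 0 := norm_ne_zero_iff.1 (by rw [hx1]; exact one_ne_zero)
    have hinv : ⟨(x : K)⁻¹, by simp [integers, hx1]⟩ * x = (1 : F.integers) :=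
      Subtype.ext (inv_mul_cancel₀ hx0)
    rw [← hinv]
    exact J.mul_mem_left _ hxJ

abbrev ResidueField (F : NAField K) := F.integers ⧸ F.maximalIdeal

noncomputable instance (F : NAField K) : Field F.ResidueField := Ideal.Quotient.field _

lemma natCard_residueField (F : NAField K) : Nat.card F.ResidueField = F.q := by
  rw [← F.card_reps, ← Nat.card_eq_finsetCard]
  refine (Nat.card_eq_of_bijective (fun s : F.reps =>
    Ideal.Quotient.mk F.maximalIdeal ⟨s, F.mem_integers.2 (F.norm_reps s s.2)⟩) ⟨?_, ?_⟩).symm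
  · intro s s' h
    have hss' := F.mem_maximalIdeal.1 (Ideal.Quotient.eq.1 h)
    exact Subtype.ext (F.reps_eq_of_norm_sub_le s.2 s'.2 (by simp [F.inv_q_pos.le]) hss')
  · intro z
    obtain ⟨x, rfl⟩ := Ideal.Quotient.mk_surjective z
    obtain ⟨s, hs, hxs⟩ := F.reps_cover x x.2
    exact ⟨⟨s, hs⟩, Ideal.Quotient.eq.2 (F.mem_maximalIdeal.2 (by simpa [norm_sub_rev] using hxs))⟩

instance (F : NAField K) : Finite F.ResidueField :=
  Nat.finite_of_card_ne_zero (by have := F.one_lt_q; rw [F.natCard_residueField]; omega)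

lemma pow_q_residue (F : NAField K) (z : F.ResidueField) : z ^ F.q = z := by
  have := Fintype.ofFinite F.ResidueField
  rw [← F.natCard_residueField, ← Fintype.card_eq_nat_card]
  exact FiniteField.pow_card z

lemma natCast_q_residue (F : NAField K) : (F.q : F.ResidueField) = 0 := by
  have := Fintype.ofFinite F.ResidueField
  rw [← F.natCard_residueField, ← Fintype.card_eq_nat_card]
  exact FiniteField.cast_card_eq_zero F.ResidueField

lemma norm_pow_q_sub_self_le (F : NAField K) {x : K} (hx : ‖x‖ ≤ 1) :
    ‖x ^ F.q - x‖ ≤ (F.q : ℝ)⁻¹ := by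
  set X : F.integers := ⟨x, hx⟩
  have hX : X ^ F.q - X ∈ F.maximalIdeal := by
    rw [← Ideal.Quotient.eq_zero_iff_mem, map_sub, map_pow, pow_q_residue, sub_self]
  simpa using F.mem_maximalIdeal.1 hX

lemma norm_pow_q_sub_pow_q_le (F : NAField K) {x y : K} (hx : ‖x‖ ≤ 1) (hy : ‖y‖ ≤ 1)
    (hxy : ‖x - y‖ ≤ (F.q : ℝ)⁻¹) : ‖x ^ F.q - y ^ F.q‖ ≤ (F.q : ℝ)⁻¹ * ‖x - y‖ := by
  set X : F.integers := ⟨x, hx⟩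
  set Y : F.integers := ⟨y, hy⟩
  have hXY : Ideal.Quotient.mk F.maximalIdeal X = Ideal.Quotient.mk F.maximalIdeal Y :=
    Ideal.Quotient.eq.2 (F.mem_maximalIdeal.2 hxy)
  have hS : ∑ i ∈ Finset.range F.q, X ^ i * Y ^ (F.q - 1 - i) ∈ F.maximalIdeal := by
    rw [← Ideal.Quotient.eq_zero_iff_mem, map_sum]
    simp only [map_mul, map_pow, hXY]
    rw [geom_sum₂_self, natCast_q_residue, zero_mul]
  have hS' := F.mem_maximalIdeal.1 hS
  push_cast at hS'
  rw [← geom_sum₂_mul, norm_mul]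
  exact mul_le_mul_of_nonneg_right hS' (norm_nonneg _)

variable {a b : K} {f : K → K}

def phiSub (F : NAField K) (b : K) (f : K → K) (x : K) : K :=
  b * (x ^ F.q - x) - f x

lemma norm_phiSub_sub_add_le (F : NAField K) (hb : ‖b‖ = F.q) (hf : F.IsLip f) {x y : K}
    (hx : ‖x‖ ≤ 1) (hy : ‖y‖ ≤ 1) (hxy : ‖x - y‖ ≤ (F.q : ℝ)⁻¹) :
    ‖F.phiSub b f x - F.phiSub b f y + b * (x - y)‖ ≤ ‖x - y‖ := by
  have := F.isUltrametricDist
  have hsplit : F.phiSub b f x - F.phiSub b f y + b * (x - y)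
      = b * (x ^ F.q - y ^ F.q) - (f x - f y) := by
    unfold phiSub
    ring
  rw [hsplit]
  refine (norm_sub_le_max _ _).trans (max_le ?_ ?_)
  · rw [norm_mul, hb]
    calc (F.q : ℝ) * ‖x ^ F.q - y ^ F.q‖ ≤ F.q * ((F.q : ℝ)⁻¹ * ‖x - y‖) := by
          gcongr
          exact F.norm_pow_q_sub_pow_q_le hx hy hxy
      _ = ‖x - y‖ := by rw [← mul_assoc, mul_inv_cancel₀ F.q_pos.ne', one_mul]
  · exact (hf.2 x y hx hy).trans (mul_le_of_le_one_left (norm_nonneg _) F.inv_q_lt_one.le)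

lemma norm_phiSub_sub_eq (F : NAField K) (hb : ‖b‖ = F.q) (hf : F.IsLip f) {x y : K}
    (hx : ‖x‖ ≤ 1) (hy : ‖y‖ ≤ 1) (hxy : ‖x - y‖ ≤ (F.q : ℝ)⁻¹) :
    ‖F.phiSub b f x - F.phiSub b f y‖ = F.q * ‖x - y‖ := by
  have := F.isUltrametricDist
  rcases eq_or_ne x y with rfl | hne
  · simp
  have hlin : ‖-(b * (x - y))‖ = F.q * ‖x - y‖ := by rw [norm_neg, norm_mul, hb]
  have hlt : ‖F.phiSub b f x - F.phiSub b f y + b * (x - y)‖ < ‖-(b * (x - y))‖ := by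
    rw [hlin]
    exact (F.norm_phiSub_sub_add_le hb hf hx hy hxy).trans_lt
      (lt_mul_of_one_lt_left (norm_pos_iff.2 (sub_ne_zero.2 hne)) (by exact_mod_cast F.one_lt_q))
  have := norm_add_eq_max_of_norm_ne_norm hlt.ne
  rwa [add_neg_cancel_right, max_eq_right hlt.le, hlin] at this

lemma exists_phiSub_eq_neg (F : NAField K) (ha : ‖a‖ ≤ 1) (hb : ‖b‖ = F.q) (hf : F.IsLip f)
    {s t : K} (hs : ‖s‖ ≤ 1) (ht : ‖t‖ ≤ 1) :
    ∃ x, ‖x - s‖ ≤ (F.q : ℝ)⁻¹ ∧ a * t + F.phiSub b f x = 0 := by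
  have := F.isUltrametricDist
  have := F.complete
  have hb0 : b ≠ 0 := norm_ne_zero_iff.1 (hb ▸ F.q_pos.ne')
  set g : K → K := fun x => x + (a * t + F.phiSub b f x) / b
  set D := Metric.closedBall s (F.q : ℝ)⁻¹
  have hD {x : K} : x ∈ D ↔ ‖x - s‖ ≤ (F.q : ℝ)⁻¹ := by rw [Metric.mem_closedBall, dist_eq_norm]
  have hmaps : Set.MapsTo g D D := by
    intro x hx
    rw [hD] at hx ⊢
    have hx1 : ‖x‖ ≤ 1 := F.norm_le_one_of_norm_sub_le hs hx
    have hval : ‖a * t + F.phiSub b f x‖ ≤ 1 := by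
      refine (norm_add_le_max _ _).trans (max_le ?_ ((norm_sub_le_max _ _).trans (max_le ?_ ?_)))
      · rw [norm_mul]
        exact mul_le_one₀ ha (norm_nonneg _) ht
      · rw [norm_mul, hb]
        calc (F.q : ℝ) * ‖x ^ F.q - x‖ ≤ F.q * (F.q : ℝ)⁻¹ := by
              gcongr
              exact F.norm_pow_q_sub_self_le hx1
          _ = 1 := mul_inv_cancel₀ F.q_pos.ne'
      · exact hf.1 x hx1
    have hstep : ‖(a * t + F.phiSub b f x) / b‖ ≤ (F.q : ℝ)⁻¹ := by
      rw [norm_div, hb, div_eq_mul_inv]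
      exact mul_le_of_le_one_left F.inv_q_pos.le hval
    simpa [g, add_sub_right_comm] using (norm_add_le_max _ _).trans (max_le hx hstep)
  have hcontr : ContractingWith (F.q : NNReal)⁻¹ (hmaps.restrict g D D) := by
    refine ⟨?_, LipschitzWith.of_dist_le_mul fun x y => ?_⟩
    · exact inv_lt_one_of_one_lt₀ (by exact_mod_cast F.one_lt_q)
    · have hx1 : ‖(x : K)‖ ≤ 1 := F.norm_le_one_of_norm_sub_le hs (hD.1 x.2)
      have hy1 : ‖(y : K)‖ ≤ 1 := F.norm_le_one_of_norm_sub_le hs (hD.1 y.2)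
      have hxy := norm_sub_le_of_norm_sub_le (hD.1 x.2) (hD.1 y.2)
      have hgxy : g x - g y = (F.phiSub b f x - F.phiSub b f y + b * ((x : K) - y)) / b := by
        simp only [g]
        field_simp
        ring
      simp only [Subtype.dist_eq, Set.MapsTo.val_restrict_apply, dist_eq_norm, hgxy, norm_div, hb,
        NNReal.coe_inv, NNReal.coe_natCast]
      rw [div_eq_inv_mul]
      exact mul_le_mul_of_nonneg_left (F.norm_phiSub_sub_add_le hb hf hx1 hy1 hxy) F.inv_q_pos.le
  obtain ⟨x, hxD, hfix, -⟩ := hcontr.exists_fixedPoint' Metric.isClosed_closedBall.isComplete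
    hmaps (Metric.mem_closedBall_self F.inv_q_pos.le) (edist_ne_top _ _)
  refine ⟨x, hD.1 hxD, ?_⟩
  simpa [g, Function.IsFixedPt, hb0] using hfix

lemma tmap_mem_vnbhd_iff (F : NAField K) {δ : ℝ} {p : K × K} :
    F.Tmap a b p ∈ Vnbhd f δ ↔ ‖p.1‖ ≤ 1 ∧ ‖a * p.2 + F.phiSub b f p.1‖ ≤ δ := by
  simp only [mem_vnbhd_iff, Tmap, phiSub, add_sub_assoc]

-- The paper's `f^s(t)`; the fallback value `s` never occurs for `‖s‖, ‖t‖ ≤ 1`.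
def branch (F : NAField K) (a b : K) (f : K → K) (s t : K) : K :=
  if h : ∃ x, ‖x - s‖ ≤ (F.q : ℝ)⁻¹ ∧ a * t + F.phiSub b f x = 0 then h.choose else s

lemma branch_spec (F : NAField K) (ha : ‖a‖ ≤ 1) (hb : ‖b‖ = F.q) (hf : F.IsLip f)
    {s t : K} (hs : ‖s‖ ≤ 1) (ht : ‖t‖ ≤ 1) :
    ‖F.branch a b f s t - s‖ ≤ (F.q : ℝ)⁻¹ ∧ a * t + F.phiSub b f (F.branch a b f s t) = 0 := by
  have h := F.exists_phiSub_eq_neg ha hb hf hs ht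
  rw [branch, dif_pos h]
  exact h.choose_spec

lemma norm_add_phiSub_eq (F : NAField K) (ha : ‖a‖ ≤ 1) (hb : ‖b‖ = F.q) (hf : F.IsLip f)
    {s x y : K} (hs : ‖s‖ ≤ 1) (hx : ‖x - s‖ ≤ (F.q : ℝ)⁻¹) (hy : ‖y‖ ≤ 1) :
    ‖a * y + F.phiSub b f x‖ = F.q * ‖x - F.branch a b f s y‖ := by
  have := F.isUltrametricDist
  obtain ⟨hbr, heq⟩ := F.branch_spec ha hb hf hs hy
  rw [← F.norm_phiSub_sub_eq hb hf (F.norm_le_one_of_norm_sub_le hs hx)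
    (F.norm_le_one_of_norm_sub_le hs hbr) (norm_sub_le_of_norm_sub_le hx hbr)]
  congr 1
  linear_combination heq

lemma isLip_branch (F : NAField K) (ha : ‖a‖ ≤ 1) (hb : ‖b‖ = F.q) (hf : F.IsLip f)
    {s : K} (hs : ‖s‖ ≤ 1) : F.IsLip (F.branch a b f s) := by
  have := F.isUltrametricDist
  refine ⟨fun t ht => F.norm_le_one_of_norm_sub_le hs (F.branch_spec ha hb hf hs ht).1,
    fun t₁ t₂ ht₁ ht₂ => ?_⟩
  obtain ⟨h₁, e₁⟩ := F.branch_spec ha hb hf hs ht₁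
  obtain ⟨h₂, e₂⟩ := F.branch_spec ha hb hf hs ht₂
  have key := F.norm_phiSub_sub_eq hb hf (F.norm_le_one_of_norm_sub_le hs h₁)
    (F.norm_le_one_of_norm_sub_le hs h₂) (norm_sub_le_of_norm_sub_le h₁ h₂)
  rw [show F.phiSub b f (F.branch a b f s t₁) - F.phiSub b f (F.branch a b f s t₂)
      = a * (t₂ - t₁) by linear_combination e₁ - e₂, norm_mul, norm_sub_rev] at key
  rw [le_inv_mul_iff₀ F.q_pos, ← key]
  exact mul_le_of_le_one_left (norm_nonneg _) ha

lemma norm_sub_le_of_norm_sub_branch_le (F : NAField K) (ha : ‖a‖ ≤ 1) (hb : ‖b‖ = F.q)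
    (hf : F.IsLip f) {s x y : K} {δ : ℝ} (hs : ‖s‖ ≤ 1) (hδ : δ ≤ 1) (hy : ‖y‖ ≤ 1)
    (hx : ‖x - F.branch a b f s y‖ ≤ (F.q : ℝ)⁻¹ * δ) : ‖x - s‖ ≤ (F.q : ℝ)⁻¹ := by
  have := F.isUltrametricDist
  refine norm_sub_le_of_norm_sub_le (hx.trans (mul_le_of_le_one_right F.inv_q_pos.le hδ)) ?_
  rw [norm_sub_rev]
  exact (F.branch_spec ha hb hf hs hy).1

lemma tmap_preimage_vnbhd_inter_unitPoly (F : NAField K) (ha : ‖a‖ ≤ 1) (hb : ‖b‖ = F.q)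
    (hf : F.IsLip f) {δ : ℝ} (hδ : δ ≤ 1) :
    (F.Tmap a b ⁻¹' Vnbhd f δ) ∩ unitPoly K
      = ⋃ s ∈ F.reps, Vnbhd (F.branch a b f s) ((F.q : ℝ)⁻¹ * δ) := by
  ext ⟨x, y⟩
  simp only [Set.mem_inter_iff, Set.mem_preimage, tmap_mem_vnbhd_iff, unitPoly, Set.mem_ofPred_eq,
    Set.mem_iUnion, exists_prop]
  simp only [mem_vnbhd_iff]
  have key {s : K} (hs : s ∈ F.reps) (hxs : ‖x - s‖ ≤ (F.q : ℝ)⁻¹) (hy : ‖y‖ ≤ 1) :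
      ‖a * y + F.phiSub b f x‖ ≤ δ ↔ ‖x - F.branch a b f s y‖ ≤ (F.q : ℝ)⁻¹ * δ := by
    rw [F.norm_add_phiSub_eq ha hb hf (F.norm_reps s hs) hxs hy, le_inv_mul_iff₀ F.q_pos]
  constructor
  · rintro ⟨⟨hx, hT⟩, -, hy⟩
    obtain ⟨s, hs, hxs⟩ := F.reps_cover x hx
    exact ⟨s, hs, hy, (key hs hxs hy).1 hT⟩
  · rintro ⟨s, hs, hy, hxb⟩
    have hxs := F.norm_sub_le_of_norm_sub_branch_le ha hb hf (F.norm_reps s hs) hδ hy hxb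
    have hx := F.norm_le_one_of_norm_sub_le (F.norm_reps s hs) hxs
    exact ⟨⟨hx, (key hs hxs hy).2 hxb⟩, hx, hy⟩

lemma disjoint_vnbhd_branch (F : NAField K) (ha : ‖a‖ ≤ 1) (hb : ‖b‖ = F.q)
    (hf : F.IsLip f) {δ : ℝ} (hδ : δ ≤ 1) {s s' : K} (hs : s ∈ F.reps) (hs' : s' ∈ F.reps)
    (hne : s ≠ s') :
    Disjoint (Vnbhd (F.branch a b f s) ((F.q : ℝ)⁻¹ * δ))
      (Vnbhd (F.branch a b f s') ((F.q : ℝ)⁻¹ * δ)) := by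
  rw [Set.disjoint_left]
  rintro ⟨x, y⟩ h h'
  rw [mem_vnbhd_iff] at h h'
  exact hne (F.reps_eq_of_norm_sub_le hs hs'
    (F.norm_sub_le_of_norm_sub_branch_le ha hb hf (F.norm_reps s hs) hδ h.1 h.2)
    (F.norm_sub_le_of_norm_sub_branch_le ha hb hf (F.norm_reps s' hs') hδ h'.1 h'.2))

end NAField

theorem stmt10_general (F : NAField K) (a b : K) (ha : ‖a‖ < 1)
    (hb : ‖b‖ = (F.q : ℝ)) (f : K → K) (hf : F.IsLip f)
    (δ : ℝ) (hδ1 : δ ≤ 1) :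
    ∃ fs : K → K → K,
      (∀ s ∈ F.reps, F.IsLip (fs s) ∧
        ∀ t : K, ‖t‖ ≤ 1 → ‖fs s t - s‖ ≤ ((F.q : ℝ))⁻¹) ∧
      ((F.Tmap a b ⁻¹' Vnbhd f δ) ∩ unitPoly K
          = ⋃ s ∈ F.reps, Vnbhd (fs s) (((F.q : ℝ))⁻¹ * δ)) ∧
      (∀ s ∈ F.reps, ∀ s' ∈ F.reps, s ≠ s' →
        Disjoint (Vnbhd (fs s) (((F.q : ℝ))⁻¹ * δ))
          (Vnbhd (fs s') (((F.q : ℝ))⁻¹ * δ))) :=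
  ⟨F.branch a b f,
    fun s hs => ⟨F.isLip_branch ha.le hb hf (F.norm_reps s hs),
      fun _ ht => (F.branch_spec ha.le hb hf (F.norm_reps s hs) ht).1⟩,
    F.tmap_preimage_vnbhd_inter_unitPoly ha.le hb hf hδ1,
    fun _ hs _ hs' hne => F.disjoint_vnbhd_branch ha.le hb hf hδ1 hs hs' hne⟩

theorem stmt10 (F : NAField K) (a b : K) (ha0 : a ≠ 0) (ha : ‖a‖ < 1)
    (hb : ‖b‖ = (F.q : ℝ)) (f : K → K) (hf : F.IsLip f)
    (δ : ℝ) (hδ0 : 0 < δ) (hδ1 : δ ≤ 1) :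
    ∃ fs : K → K → K,
      (∀ s ∈ F.reps, F.IsLip (fs s) ∧
        ∀ t : K, ‖t‖ ≤ 1 → ‖fs s t - s‖ ≤ ((F.q : ℝ))⁻¹) ∧
      ((F.Tmap a b ⁻¹' Vnbhd f δ) ∩ unitPoly K
          = ⋃ s ∈ F.reps, Vnbhd (fs s) (((F.q : ℝ))⁻¹ * δ)) ∧
      (∀ s ∈ F.reps, ∀ s' ∈ F.reps, s ≠ s' →
        Disjoint (Vnbhd (fs s) (((F.q : ℝ))⁻¹ * δ))
          (Vnbhd (fs s') (((F.q : ℝ))⁻¹ * δ))) :=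
  stmt10_general F a b ha hb f hf δ hδ1
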